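/- arXiv:1808.00912 — 4 statements merged into one kernel-verified Lean document; each statement's English description precedes it below -/
import Mathlib

section
/- With h(w,z) = -z²+2z+zw-1, r₁(w,z) = -h_w/h_z = -z/(-2z+2+w), and ρ = (3-√5)/2, the mean parameter μ₁ = -r₁(1,ρ)/ρ equals √5/5, and the variance parameter σ₁² = μ₁² - r₂(1,ρ)/ρ equals 2√5/25, where r₂ = -(r₁²h_zz + 2r₁h_zw + h_w + h_ww)/h_z. -/
/-- For h(w,z) = -z²+2z+zw-1 with partial derivatives h_z = -2z+2+w, h_w = z,
h_zz = -2, h_zw = 1, h_ww = 0, with r₁ = -h_w/h_z and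
r₂ = -(r₁²h_zz + 2r₁h_zw + h_w + h_ww)/h_z, evaluated at (1,ρ) with ρ = (3-√5)/2,
we have μ₁ = -r₁/ρ = √5/5 and σ₁² = μ₁² - r₂/ρ = 2√5/25. -/
theorem dcc_width_mean_variance :
    let ρ : ℝ := (3 - Real.sqrt 5) / 2
    let h_z : ℝ → ℝ → ℝ := fun w z => -2*z + 2 + w
    let h_w : ℝ → ℝ → ℝ := fun _ z => z
    let h_zz : ℝ → ℝ → ℝ := fun _ _ => (-2 : ℝ)
    let h_zw : ℝ → ℝ → ℝ := fun _ _ => (1 : ℝ)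
    let h_ww : ℝ → ℝ → ℝ := fun _ _ => (0 : ℝ)
    let r₁ : ℝ → ℝ → ℝ := fun w z => -(h_w w z) / (h_z w z)
    let r₂ : ℝ → ℝ → ℝ := fun w z =>
      -((r₁ w z)^2 * h_zz w z + 2 * r₁ w z * h_zw w z + h_w w z + h_ww w z) / (h_z w z)
    (r₁ 1 ρ = -ρ / (-2*ρ + 2 + 1)) ∧
    (-(r₁ 1 ρ) / ρ = Real.sqrt 5 / 5) ∧
    ((-(r₁ 1 ρ) / ρ)^2 - r₂ 1 ρ / ρ = 2 * Real.sqrt 5 / 25) := by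
  intro ρ h_z h_w h_zz h_zw h_ww r₁ r₂
  have hs : Real.sqrt 5 ^ 2 = 5 := Real.sq_sqrt (by norm_num)
  have hs2 : (2:ℝ) < Real.sqrt 5 := by
    nlinarith [Real.sqrt_nonneg 5]
  have hs3 : Real.sqrt 5 < 3 := by nlinarith [Real.sqrt_nonneg 5]
  have hρ : ρ = (3 - Real.sqrt 5) / 2 := rfl
  have hρpos : (0:ℝ) < ρ := by rw [hρ]; linarith
  have hz : -2*ρ + 2 + 1 = Real.sqrt 5 := by rw [hρ]; ring
  have hzne : (-2*ρ + 2 + 1 : ℝ) ≠ 0 := by rw [hz]; positivity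
  have hspos : (0:ℝ) < Real.sqrt 5 := by linarith
  refine ⟨rfl, ?_, ?_⟩
  · show -(-ρ / (-2*ρ + 2 + 1)) / ρ = Real.sqrt 5 / 5
    rw [hz]
    field_simp
    nlinarith [hs]
  · have hρne : ρ ≠ 0 := ne_of_gt hρpos
    show (-(-ρ / (-2*ρ + 2 + 1)) / ρ)^2 -
      (-((-ρ / (-2*ρ + 2 + 1))^2 * (-2) + 2 * (-ρ / (-2*ρ + 2 + 1)) * 1 + ρ + 0) / (-2*ρ + 2 + 1)) / ρ
      = 2 * Real.sqrt 5 / 25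
    rw [hz]
    have hA : -(-ρ / Real.sqrt 5) / ρ = 1 / Real.sqrt 5 := by
      field_simp
    have hB : -((-ρ / Real.sqrt 5)^2 * (-2) + 2 * (-ρ / Real.sqrt 5) * 1 + ρ + 0) / Real.sqrt 5 / ρ
        = (2*ρ/(Real.sqrt 5)^2 + 2/Real.sqrt 5 - 1)/Real.sqrt 5 := by
      field_simp
      ring
    rw [hA, hB, hs]
    have h2ρ : 2 * ρ = 3 - Real.sqrt 5 := by rw [hρ]; ring
    rw [h2ρ]
    rw [div_pow, one_pow, hs]
    field_simp
    ring_nf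
    nlinarith [hs, hspos]
end

section
/- Let ρ = (3-√5)/2, π₂(k) = kρ^k, P_u(r) = ρ^r(√5+1)/2, and define f(t) = ∑_{r≥1} P_u(r)π₂(r+t) + ∑_{r≥t+1} P_u(r)π₂(r-t) for t ≥ 1. Then E_w := ∑_{t≥1} f(t)·t = (7√5-3)/10. -/
/-!
With `P_u(r) = c ρ^r`, both inner sums defining `f` are arithmetic-geometric series in `ρ²`,
which gives
`f t = c ρ^(t+2) (2 / (1 - ρ²)² + t / (1 - ρ²))`. The outer sum is then a combination of
`∑ (t+1) ρ^t = 1 / (1 - ρ)²` and `∑ (t+1)² ρ^t = (1 + ρ) / (1 - ρ)³`, so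
`E_w = c ρ³ / (1 - ρ)⁴ · (1 + 2 / (1 + ρ)²)`. For `ρ² - 3ρ + 1 = 0` we have `(1 - ρ)² = ρ` and
`(1 + ρ)² = 5ρ`, which collapses this to `c (ρ + 2/5)`.
-/

open Real

section Geometric

variable {𝕜 : Type*} [NormedField 𝕜] {r : 𝕜}

theorem hasSum_add_mul_geometric_of_norm_lt_one (hr : ‖r‖ < 1) (a : 𝕜) :
    HasSum (fun n : ℕ => ((n : 𝕜) + a) * r ^ n) (r / (1 - r) ^ 2 + a / (1 - r)) := by
  simpa [add_mul, div_eq_mul_inv] using (hasSum_coe_mul_geometric_of_norm_lt_one hr).add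
    ((hasSum_geometric_of_norm_lt_one hr).mul_left a)

theorem hasSum_succ_sq_mul_geometric_of_norm_lt_one (hr : ‖r‖ < 1) :
    HasSum (fun n : ℕ => ((n : 𝕜) + 1) ^ 2 * r ^ n) ((1 + r) / (1 - r) ^ 3) := by
  have hr₁ : 1 - r ≠ 0 := sub_ne_zero.2 fun h => by simp [← h] at hr
  have h := ((hasSum_choose_mul_geometric_of_norm_lt_one 2 hr).mul_left 2).sub
    (hasSum_add_mul_geometric_of_norm_lt_one hr 1)
  rw [show (1 + r) / (1 - r) ^ 3 = 2 * (1 / (1 - r) ^ (2 + 1)) - (r / (1 - r) ^ 2 + 1 / (1 - r)) by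
    field_simp; ring]
  refine h.congr_fun fun n => ?_
  have hchoose : (((n + 2).choose 2 : ℕ) : 𝕜) * 2 = (n + 2) * (n + 1) := by
    have h : (n + 2).choose 2 * 2 = (n + 2) * (n + 1) := by
      simpa using (Nat.add_one_mul_choose_eq (n + 1) 1).symm
    simpa using congrArg (Nat.cast : ℕ → 𝕜) h
  linear_combination -r ^ n * hchoose

end Geometric

/-- The paper's `f(t)` for `P_u(r) = ρ^r c` and `π₂(k) = k ρ^k`, the second sum reindexed from
`r ≥ t + 1`. -/
noncomputable def offsetDensity (ρ c : ℝ) (t : ℕ) : ℝ :=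
  (∑' r : ℕ, ρ ^ (r + 1) * c * (((r + 1 + t : ℕ) : ℝ) * ρ ^ (r + 1 + t))) +
    ∑' r : ℕ, ρ ^ (r + t + 1) * c * (((r + 1 : ℕ) : ℝ) * ρ ^ (r + 1))

theorem offsetDensity_eq {ρ : ℝ} (hρ : |ρ| < 1) (c : ℝ) (t : ℕ) :
    offsetDensity ρ c t = c * ρ ^ (t + 2) * (2 / (1 - ρ ^ 2) ^ 2 + t / (1 - ρ ^ 2)) := by
  have hq : ‖ρ ^ 2‖ < 1 := by
    rw [norm_pow, Real.norm_eq_abs]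
    exact pow_lt_one₀ (abs_nonneg ρ) hρ two_ne_zero
  have hq₁ : 1 - ρ ^ 2 ≠ 0 := by
    rw [← sq_abs]
    nlinarith [abs_nonneg ρ]
  have h₁ : HasSum (fun r : ℕ => ρ ^ (r + 1) * c * (((r + 1 + t : ℕ) : ℝ) * ρ ^ (r + 1 + t)))
      (c * ρ ^ (t + 2) * (ρ ^ 2 / (1 - ρ ^ 2) ^ 2 + (t + 1) / (1 - ρ ^ 2))) :=
    ((hasSum_add_mul_geometric_of_norm_lt_one hq (t + 1)).mul_left (c * ρ ^ (t + 2))).congr_fun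
      fun r => by rw [← pow_mul]; push_cast; ring
  have h₂ : HasSum (fun r : ℕ => ρ ^ (r + t + 1) * c * (((r + 1 : ℕ) : ℝ) * ρ ^ (r + 1)))
      (c * ρ ^ (t + 2) * (ρ ^ 2 / (1 - ρ ^ 2) ^ 2 + 1 / (1 - ρ ^ 2))) :=
    ((hasSum_add_mul_geometric_of_norm_lt_one hq 1).mul_left (c * ρ ^ (t + 2))).congr_fun
      fun r => by rw [← pow_mul]; push_cast; ring
  rw [offsetDensity, h₁.tsum_eq, h₂.tsum_eq]
  field_simp
  ring

theorem hasSum_offsetDensity_mul {ρ : ℝ} (hρ : |ρ| < 1) (c : ℝ) :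
    HasSum (fun t : ℕ => offsetDensity ρ c (t + 1) * ((t + 1 : ℕ) : ℝ))
      (c * ρ ^ 3 / (1 - ρ) ^ 4 * (1 + 2 / (1 + ρ) ^ 2)) := by
  obtain ⟨hρ_gt, hρ_lt⟩ := abs_lt.1 hρ
  have hρ₁ : 1 - ρ ≠ 0 := by linarith
  have hρ₂ : 1 + ρ ≠ 0 := by linarith
  have hq : 1 - ρ ^ 2 = (1 - ρ) * (1 + ρ) := by ring
  set a := c * ρ ^ 3 * (2 / (1 - ρ ^ 2) ^ 2)
  set b := c * ρ ^ 3 / (1 - ρ ^ 2)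
  have h := ((hasSum_add_mul_geometric_of_norm_lt_one hρ 1).mul_left a).add
    ((hasSum_succ_sq_mul_geometric_of_norm_lt_one hρ).mul_left b)
  rw [show c * ρ ^ 3 / (1 - ρ) ^ 4 * (1 + 2 / (1 + ρ) ^ 2) =
      a * (ρ / (1 - ρ) ^ 2 + 1 / (1 - ρ)) + b * ((1 + ρ) / (1 - ρ) ^ 3) by
    simp only [a, b, hq]; field_simp; ring]
  refine h.congr_fun fun t => ?_
  rw [offsetDensity_eq hρ]
  push_cast
  ring

theorem offset_mean_eq_of_sq_sub_three_mul_add_one {ρ : ℝ} (hρ : ρ ^ 2 - 3 * ρ + 1 = 0) (c : ℝ) :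
    c * ρ ^ 3 / (1 - ρ) ^ 4 * (1 + 2 / (1 + ρ) ^ 2) = c * (ρ + 2 / 5) := by
  have hρ₀ : ρ ≠ 0 := by rintro rfl; norm_num at hρ
  rw [show (1 - ρ) ^ 4 = ρ ^ 2 by linear_combination (ρ ^ 2 - 2 * ρ + 1 + ρ) * hρ,
    show (1 + ρ) ^ 2 = 5 * ρ by linear_combination hρ]
  field_simp

/-- For ρ = (3-√5)/2, π₂(k) = kρ^k, P_u(r) = ρ^r(√5+1)/2 and
f(t) = ∑_{r≥1} P_u(r)π₂(r+t) + ∑_{r≥t+1} P_u(r)π₂(r-t) (t ≥ 1), the expected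
absolute upper offset is E_w = ∑_{t≥1} f(t)·t = (7√5-3)/10. -/
theorem dcc_Ew :
    let ρ : ℝ := (3 - Real.sqrt 5) / 2
    let π₂ : ℕ → ℝ := fun k => (k : ℝ) * ρ ^ k
    let Pu : ℕ → ℝ := fun r => ρ ^ r * (Real.sqrt 5 + 1) / 2
    let f : ℕ → ℝ := fun t =>
      (∑' r : ℕ, Pu (r + 1) * π₂ (r + 1 + t)) +
      (∑' r : ℕ, Pu (r + t + 1) * π₂ (r + 1))
    HasSum (fun t : ℕ => f (t + 1) * ((t + 1 : ℕ) : ℝ)) ((7 * Real.sqrt 5 - 3) / 10) := by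
  intro ρ π₂ Pu f
  have h5 : √5 ^ 2 = 5 := sq_sqrt (by norm_num)
  have h5_gt : 1 < √5 := by nlinarith [sqrt_nonneg 5]
  have h5_lt : √5 < 5 := by nlinarith [sqrt_nonneg 5]
  have hρ_def : ρ = (3 - √5) / 2 := rfl
  have hρ : |ρ| < 1 := abs_lt.2 ⟨by linarith, by linarith⟩
  have hρ_quad : ρ ^ 2 - 3 * ρ + 1 = 0 := by rw [hρ_def]; linear_combination h5 / 4
  have hf : f = offsetDensity ρ ((√5 + 1) / 2) := by
    funext t
    simp only [f, Pu, π₂, offsetDensity, mul_div_assoc]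
  have hE : (7 * √5 - 3) / 10 =
      (√5 + 1) / 2 * ρ ^ 3 / (1 - ρ) ^ 4 * (1 + 2 / (1 + ρ) ^ 2) := by
    rw [offset_mean_eq_of_sq_sub_three_mul_add_one hρ_quad]
    linear_combination h5 / 4
  rw [hf, hE]
  exact hasSum_offsetDensity_mul hρ _
end

section
/- Let ρ ∈ (0,1) satisfy 4ρ³ - 7ρ² + 5ρ - 1 = 0 and set a = (5-13ρ+7ρ²)/(11-35ρ+41ρ²), b = (3-11ρ+17ρ²)/(11-35ρ+41ρ²). Then for every integer k ≥ 1, ∑_{j=1}^∞ (k+j-1)ρ^j(aj+b) = ak+b. -/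
/-! Writing `(k + j - 1)(a j + b)` as a quadratic in `j`, the series is a combination of
`∑ ρ^j`, `∑ j ρ^j` and `∑ j² ρ^j`, so its sum is an explicit rational function of `ρ`, affine
in `k`. After clearing denominators its difference with `a k + b` is
`(k (5 - 11ρ + 6ρ²) + 3 - 5ρ) (4ρ³ - 7ρ² + 5ρ - 1)`, which vanishes at the root `ρ`. -/

section MulGeometric

variable {𝕜 : Type*} [NormedField 𝕜] {r : 𝕜}

theorem hasSum_sq_mul_geometric_of_norm_lt_one (hr : ‖r‖ < 1) :
    HasSum (fun n : ℕ ↦ (n : 𝕜) ^ 2 * r ^ n) (r * (1 + r) / (1 - r) ^ 3) := by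
  have hr1 : 1 - r ≠ 0 := sub_ne_zero.2 fun h ↦ by simp [← h] at hr
  -- `n² = 2 (n+2 choose 2) - 3 (n+1 choose 1) + (n choose 0)`
  have h := (((hasSum_choose_mul_geometric_of_norm_lt_one 2 hr).mul_left 2).sub
    ((hasSum_choose_mul_geometric_of_norm_lt_one 1 hr).mul_left 3)).add
    (hasSum_choose_mul_geometric_of_norm_lt_one 0 hr)
  have hsum : 2 * (1 / (1 - r) ^ (2 + 1)) - 3 * (1 / (1 - r) ^ (1 + 1)) + 1 / (1 - r) ^ (0 + 1) =
      r * (1 + r) / (1 - r) ^ 3 := by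
    field_simp
    ring
  refine hsum ▸ h.congr_fun fun n ↦ ?_
  have hc : (n + 2) * (n + 1).choose 1 = (n + 2).choose 2 * 2 := Nat.add_one_mul_choose_eq (n + 1) 1
  rw [Nat.choose_one_right] at hc
  replace hc := congrArg (Nat.cast : ℕ → 𝕜) hc
  simp only [Nat.choose_one_right, Nat.choose_zero_right]
  push_cast at hc ⊢
  linear_combination r ^ n * hc

theorem hasSum_quadratic_mul_geometric_of_norm_lt_one (hr : ‖r‖ < 1) (p q s : 𝕜) :
    HasSum (fun n : ℕ ↦ (p * n ^ 2 + q * n + s) * r ^ n)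
      (p * (r * (1 + r) / (1 - r) ^ 3) + q * (r / (1 - r) ^ 2) + s / (1 - r)) := by
  have h := (((hasSum_sq_mul_geometric_of_norm_lt_one hr).mul_left p).add
    ((hasSum_coe_mul_geometric_of_norm_lt_one hr).mul_left q)).add
    ((hasSum_geometric_of_norm_lt_one hr).mul_left s)
  rw [← div_eq_mul_inv] at h
  exact h.congr_fun fun n ↦ by ring

/-- `∑_{j ≥ 1} U(κ, j) C(j)` for the gluing kernel `U(κ, j) = κ + j - 1` and `C(j) = (a j + b) r^j`. -/
theorem hasSum_gluing_series (hr : ‖r‖ < 1) (a b κ : 𝕜) :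
    HasSum (fun j : ℕ ↦ (κ + ((j + 1 : ℕ) : 𝕜) - 1) * r ^ (j + 1) * (a * ((j + 1 : ℕ) : 𝕜) + b))
      (r * (a * (r * (1 + r) / (1 - r) ^ 3) + (a * (κ + 1) + b) * (r / (1 - r) ^ 2)
        + κ * (a + b) / (1 - r))) :=
  ((hasSum_quadratic_mul_geometric_of_norm_lt_one hr a (a * (κ + 1) + b) (κ * (a + b))).mul_left
    r).congr_fun fun j ↦ by push_cast; ring

end MulGeometric

theorem gluing_closed_form_eq_of_root {ρ a b : ℝ} (hroot : 4 * ρ ^ 3 - 7 * ρ ^ 2 + 5 * ρ - 1 = 0)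
    (ha : a = (5 - 13 * ρ + 7 * ρ ^ 2) / (11 - 35 * ρ + 41 * ρ ^ 2))
    (hb : b = (3 - 11 * ρ + 17 * ρ ^ 2) / (11 - 35 * ρ + 41 * ρ ^ 2)) (κ : ℝ) :
    ρ * (a * (ρ * (1 + ρ) / (1 - ρ) ^ 3) + (a * (κ + 1) + b) * (ρ / (1 - ρ) ^ 2)
      + κ * (a + b) / (1 - ρ)) = a * κ + b := by
  have hρ : 1 - ρ ≠ 0 := by
    intro h
    obtain rfl : ρ = 1 := by linarith
    norm_num at hroot
  rw [ha, hb]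
  field_simp
  -- both sides now have the denominator `11 - 35ρ + 41ρ²`
  congr 1
  linear_combination (κ * (5 - 11 * ρ + 6 * ρ ^ 2) + 3 - 5 * ρ) * hroot

/-- For ρ ∈ (0,1) with 4ρ³-7ρ²+5ρ-1 = 0 and a, b as given, for every k ≥ 1,
∑_{j≥1} (k+j-1)ρ^j(aj+b) = ak+b. -/
theorem cc_C2_fixed_point (ρ : ℝ) (hρ0 : 0 < ρ) (hρ1 : ρ < 1)
    (hroot : 4 * ρ^3 - 7 * ρ^2 + 5 * ρ - 1 = 0) :
    let a : ℝ := (5 - 13*ρ + 7*ρ^2) / (11 - 35*ρ + 41*ρ^2)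
    let b : ℝ := (3 - 11*ρ + 17*ρ^2) / (11 - 35*ρ + 41*ρ^2)
    ∀ k : ℕ, 1 ≤ k →
      HasSum (fun j : ℕ =>
          ((k : ℝ) + ((j + 1 : ℕ) : ℝ) - 1) * ρ ^ (j + 1) * (a * ((j + 1 : ℕ) : ℝ) + b))
        (a * (k : ℝ) + b) := by
  intro a b k _
  have hρ : ‖ρ‖ < 1 := by rwa [Real.norm_of_nonneg hρ0.le]
  rw [← gluing_closed_form_eq_of_root hroot rfl rfl]
  exact hasSum_gluing_series hρ a b k
end

section
/- Define polynomials P_n(x,z), Q_n(x,z) by the recursions P_n = P_{n-1} - zⁿx·P_{n-2}, Q_n = Q_{n-1} - zⁿx·Q_{n-2} with P_{-1}=0, P₀=Q_{-1}=Q₀=1. Then P_n = ∑_{j≥0} qbinom(n-j, j)·(-1)^j z^{j²+j} x^j and Q_n = ∑_{j≥0} qbinom(n+1-j, j)·(-1)^j z^{j²} x^j, where qbinom denotes the Gaussian (q=z) binomial coefficient. -/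
/-!
Both `P_n` and `Q_{n-1}` are instances of `S_c(n) = ∑_j [n-j, j] (-1)^j z^(j² + c j) x^j`
(`c = 1` and `c = 0`). Termwise, the q-Pascal rule `[m+1, j+1] = [m, j+1] + z^(m-j) [m, j]`
turns `S_c(n+2) = S_c(n+1) - z^(n+1+c) x S_c(n)` into an identity, so the closed forms satisfy
the defining recurrences and agree with `P`, `Q` on the initial values.
-/

open Finset

theorem eq_of_two_step_recurrence {α : Type*} (step : ℕ → α → α → α) {f g : ℕ → α}
    (h0 : f 0 = g 0) (h1 : f 1 = g 1)
    (hf : ∀ n, f (n + 2) = step n (f n) (f (n + 1)))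
    (hg : ∀ n, g (n + 2) = step n (g n) (g (n + 1))) : f = g := by
  funext n
  induction n using Nat.twoStepInduction with
  | zero => exact h0
  | one => exact h1
  | more n ihn ihn1 => rw [hf, hg, ihn, ihn1]

section QBinom

variable {K : Type*} [Field K]

noncomputable def qbinom (z : K) (m j : ℕ) : K :=
  if j ≤ m then ∏ i ∈ range j, (1 - z ^ (m - j + i + 1)) / (1 - z ^ (i + 1)) else 0

theorem qbinom_zero_right (z : K) (m : ℕ) : qbinom z m 0 = 1 := by
  simp [qbinom]

theorem qbinom_of_lt (z : K) {m j : ℕ} (h : m < j) : qbinom z m j = 0 :=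
  if_neg (Nat.not_le.2 h)

theorem qbinom_of_le (z : K) {m j : ℕ} (h : j ≤ m) :
    qbinom z m j = (∏ i ∈ range j, (1 - z ^ (m - j + i + 1))) / ∏ i ∈ range j, (1 - z ^ (i + 1)) := by
  rw [qbinom, if_pos h, prod_div_distrib]

variable {z : K} (hz : ∀ i : ℕ, 1 ≤ i → z ^ i ≠ 1)
include hz

theorem one_sub_pow_succ_ne_zero (i : ℕ) : 1 - z ^ (i + 1) ≠ 0 :=
  sub_ne_zero.2 (hz (i + 1) i.succ_pos).symm

theorem qbinom_self (m : ℕ) : qbinom z m m = 1 := by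
  rw [qbinom_of_le z le_rfl, Nat.sub_self]
  simp only [zero_add]
  exact div_self (prod_ne_zero_iff.2 fun i _ => one_sub_pow_succ_ne_zero hz i)

theorem qbinom_succ_succ (m j : ℕ) :
    qbinom z (m + 1) (j + 1) = qbinom z m (j + 1) + z ^ (m - j) * qbinom z m j := by
  rcases lt_trichotomy j m with hjm | rfl | hmj
  · obtain ⟨a, rfl⟩ : ∃ a, m = a + j + 1 := ⟨m - j - 1, by omega⟩
    rw [qbinom_of_le z (by omega), qbinom_of_le z (by omega), qbinom_of_le z (by omega),
      show a + j + 1 + 1 - (j + 1) = a + 1 by omega, show a + j + 1 - (j + 1) = a by omega,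
      show a + j + 1 - j = a + 1 by omega]
    set X := ∏ i ∈ range j, (1 - z ^ (a + 1 + i + 1))
    set D := ∏ i ∈ range j, (1 - z ^ (i + 1))
    have hX_succ : ∏ i ∈ range (j + 1), (1 - z ^ (a + 1 + i + 1)) = X * (1 - z ^ (a + j + 2)) := by
      rw [prod_range_succ, show a + 1 + j + 1 = a + j + 2 by omega]
    have hX_shift : ∏ i ∈ range (j + 1), (1 - z ^ (a + i + 1)) = X * (1 - z ^ (a + 1)) := by
      rw [prod_range_succ', add_zero]
      congr 1
      exact prod_congr rfl fun i _ => by rw [show a + (i + 1) + 1 = a + 1 + i + 1 by omega]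
    have hD_succ : ∏ i ∈ range (j + 1), (1 - z ^ (i + 1)) = D * (1 - z ^ (j + 1)) :=
      prod_range_succ _ j
    have hD : D ≠ 0 := prod_ne_zero_iff.2 fun i _ => one_sub_pow_succ_ne_zero hz i
    have hDj := one_sub_pow_succ_ne_zero hz j
    rw [hX_succ, hX_shift, hD_succ]
    field_simp
    ring
  · rw [qbinom_self hz, qbinom_self hz, qbinom_of_lt z (Nat.lt_succ_self j), Nat.sub_self]
    ring
  · rw [qbinom_of_lt z (by omega), qbinom_of_lt z (by omega), qbinom_of_lt z hmj]
    ring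

end QBinom

section EscalierSum

variable {K : Type*} [Field K] (x z : K)

noncomputable def escalierTerm (c n j : ℕ) : K :=
  qbinom z (n - j) j * (-1) ^ j * z ^ (j ^ 2 + c * j) * x ^ j

noncomputable def escalierSum (c n : ℕ) : K :=
  ∑ j ∈ range (n + 1), escalierTerm x z c n j

theorem escalierTerm_zero_right (c n : ℕ) : escalierTerm x z c n 0 = 1 := by
  simp [escalierTerm, qbinom_zero_right]

theorem escalierTerm_eq_zero {c n j : ℕ} (h : n < 2 * j) : escalierTerm x z c n j = 0 := by
  rw [escalierTerm, qbinom_of_lt z (by omega), zero_mul, zero_mul, zero_mul]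

theorem escalierSum_succ_eq_sum_range (c n : ℕ) :
    escalierSum x z c (n + 1) = ∑ j ∈ range (n + 1), escalierTerm x z c (n + 1) j := by
  rw [escalierSum, sum_range_succ, escalierTerm_eq_zero x z (by omega), add_zero]

variable {z} (hz : ∀ i : ℕ, 1 ≤ i → z ^ i ≠ 1)
include hz

theorem escalierTerm_succ_succ (c m j : ℕ) :
    escalierTerm x z c (m + 2) (j + 1)
      = escalierTerm x z c (m + 1) (j + 1) - z ^ (m + 1 + c) * x * escalierTerm x z c m j := by
  rcases lt_or_ge m (2 * j) with hmj | hjm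
  · rw [escalierTerm_eq_zero x z (by omega), escalierTerm_eq_zero x z (by omega),
      escalierTerm_eq_zero x z hmj]
    ring
  have hpow : z ^ (m - j - j) * z ^ ((j + 1) ^ 2 + c * (j + 1))
      = z ^ (j ^ 2 + c * j) * z ^ (m + 1 + c) := by
    obtain ⟨k, rfl⟩ : ∃ k, m = 2 * j + k := ⟨m - 2 * j, by omega⟩
    rw [← pow_add, ← pow_add, show 2 * j + k - j - j = k by omega]
    ring_nf
  rw [escalierTerm, escalierTerm, escalierTerm, show m + 2 - (j + 1) = m - j + 1 by omega,
    show m + 1 - (j + 1) = m - j by omega, qbinom_succ_succ hz]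
  linear_combination (-1) ^ (j + 1) * qbinom z (m - j) j * x ^ (j + 1) * hpow

theorem escalierSum_succ_succ (c m : ℕ) :
    escalierSum x z c (m + 2)
      = escalierSum x z c (m + 1) - z ^ (m + 1 + c) * x * escalierSum x z c m := by
  have hsum1 : escalierSum x z c (m + 1)
      = ∑ j ∈ range (m + 1), escalierTerm x z c (m + 1) (j + 1) + 1 := by
    rw [escalierSum, sum_range_succ', escalierTerm_zero_right]
  have hsum0 : ∑ j ∈ range (m + 2), escalierTerm x z c m j = escalierSum x z c m := by
    rw [escalierSum, sum_range_succ _ (m + 1), escalierTerm_eq_zero x z (by omega), add_zero]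
  rw [escalierSum, sum_range_succ', escalierTerm_zero_right]
  simp only [escalierTerm_succ_succ x hz, sum_sub_distrib, ← mul_sum]
  rw [sum_range_succ _ (m + 1), escalierTerm_eq_zero x z (j := m + 1 + 1) (by omega), hsum1, hsum0]
  ring

end EscalierSum

/-- The convergent numerators/denominators P_n, Q_n of the continued fraction for
escalier polyominoes, defined by P_n = P_{n-1} - zⁿx P_{n-2}, Q_n = Q_{n-1} - zⁿx Q_{n-2}
with P_{-1}=0, P₀=Q_{-1}=Q₀=1 (so P₁ = 1, Q₁ = 1 - zx), have the explicit forms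
P_n = ∑_j qbinom(n-j,j)(-1)^j z^{j²+j} x^j and Q_n = ∑_j qbinom(n+1-j,j)(-1)^j z^{j²} x^j,
where qbinom is the Gaussian binomial in variable z. -/
theorem escalier_convergents (x z : ℝ) (hz : ∀ i : ℕ, 1 ≤ i → z ^ i ≠ 1)
    (P Q : ℕ → ℝ)
    (hP0 : P 0 = 1) (hP1 : P 1 = 1)
    (hQ0 : Q 0 = 1) (hQ1 : Q 1 = 1 - z * x)
    (hPrec : ∀ n : ℕ, P (n + 2) = P (n + 1) - z ^ (n + 2) * x * P n)
    (hQrec : ∀ n : ℕ, Q (n + 2) = Q (n + 1) - z ^ (n + 2) * x * Q n) :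
    let qbinom : ℕ → ℕ → ℝ := fun m j =>
      if j ≤ m then ∏ i ∈ Finset.range j, (1 - z ^ (m - j + i + 1)) / (1 - z ^ (i + 1))
      else 0
    ∀ n : ℕ,
      P n = ∑ j ∈ Finset.range (n + 1),
        qbinom (n - j) j * (-1) ^ j * z ^ (j^2 + j) * x ^ j ∧
      Q n = ∑ j ∈ Finset.range (n + 1),
        qbinom (n + 1 - j) j * (-1) ^ j * z ^ (j^2) * x ^ j := by
  intro qbinom n
  have hP : P = escalierSum x z 1 :=
    eq_of_two_step_recurrence (fun n u v => v - z ^ (n + 2) * x * u)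
      (by simp [hP0, escalierSum, escalierTerm_zero_right])
      (by simp [hP1, escalierSum, sum_range_succ, escalierTerm_zero_right, escalierTerm_eq_zero])
      hPrec (escalierSum_succ_succ x hz 1)
  have hQ : Q = fun n => escalierSum x z 0 (n + 1) :=
    eq_of_two_step_recurrence (fun n u v => v - z ^ (n + 2) * x * u)
      (by simp [hQ0, escalierSum, sum_range_succ, escalierTerm_zero_right, escalierTerm_eq_zero])
      (by simp [hQ1, escalierSum, sum_range_succ, escalierTerm, qbinom_zero_right, qbinom_of_lt,
            qbinom_self hz]; ring)
      hQrec (fun n => escalierSum_succ_succ x hz 0 (n + 1))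
  subst hP hQ
  refine ⟨?_, ?_⟩
  · simp only [escalierSum, escalierTerm, one_mul]
    rfl
  · simp only [escalierSum_succ_eq_sum_range, escalierTerm, zero_mul, add_zero]
    rfl
end
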